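/- arXiv:2601.21355 — 4 statements merged into one kernel-verified Lean document; each statement's English description precedes it below -/
import Mathlib

section
/- Let θ̂⁺ = θ̂ − γ ∑_{i=1}^n (π_i/(n y_i)) ∇f_i(θ_i), where θ̂ = ∑_{i=1}^n π_i θ_i. Then F(θ̂⁺) − F(θ̂) ≤ (−γ/2 + γ²L)‖∇F(θ̂)‖² + (γ²L + γ/2)·(2/n)∑_{i=1}^n (ε/y_i)²‖∇f_i(θ_i)‖² + (γ²L + γ/2)·(2L²/n)∑_{i=1}^n ‖θ_i − θ̂‖². -/
/-!
The averaged step is an inexact gradient step `θ̂⁺ = θ̂ - γ g` for `F`, so the descent lemma for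
the `L`-smooth `F` bounds `F(θ̂⁺) - F(θ̂)` by `‖∇F(θ̂)‖²` and the error `‖g - ∇F(θ̂)‖²`.
That error is the average of `(π_i/y_i) ∇f_i(θ_i) - ∇f_i(θ̂)
= (π_i/y_i - 1) ∇f_i(θ_i) + (∇f_i(θ_i) - ∇f_i(θ̂))`, where `|π_i/y_i - 1| ≤ ε/y_i` and the
second difference is at most `L ‖θ_i - θ̂‖`; Jensen's inequality for `‖·‖²` then gives the bound.
-/

theorem nonneg_of_norm_sub_le_mul_norm_sub {E G : Type*} [NormedAddCommGroup E] [Nontrivial E]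
    [SeminormedAddCommGroup G] {g : E → G} {L : ℝ}
    (hg : ∀ x z, ‖g x - g z‖ ≤ L * ‖x - z‖) : 0 ≤ L := by
  obtain ⟨x, hx⟩ := exists_ne (0 : E)
  have h := (norm_nonneg _).trans (hg x 0)
  rw [sub_zero] at h
  exact nonneg_of_mul_nonneg_left h (norm_pos_iff.mpr hx)

section Average

variable {E : Type*} [NormedAddCommGroup E] [NormedSpace ℝ E] {n : ℕ}

theorem norm_average_le (hn : 0 < n) {v : Fin n → E} {C : ℝ} (hv : ∀ i, ‖v i‖ ≤ C) :
    ‖(1 / (n : ℝ)) • ∑ i, v i‖ ≤ C := by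
  have hn' : (0 : ℝ) < n := Nat.cast_pos.mpr hn
  rw [norm_smul, Real.norm_of_nonneg (by positivity), one_div, inv_mul_le_iff₀ hn']
  simpa using norm_sum_le_of_le Finset.univ fun i _ => hv i

theorem norm_average_sq_le (v : Fin n → E) :
    ‖(1 / (n : ℝ)) • ∑ i, v i‖ ^ 2 ≤ (1 / (n : ℝ)) * ∑ i, ‖v i‖ ^ 2 := by
  rcases Nat.eq_zero_or_pos n with rfl | hn
  · simp
  have hn' : (0 : ℝ) < n := Nat.cast_pos.mpr hn
  have hsum : ‖∑ i, v i‖ ^ 2 ≤ n * ∑ i, ‖v i‖ ^ 2 := by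
    calc ‖∑ i, v i‖ ^ 2 ≤ (∑ i, ‖v i‖) ^ 2 := by gcongr; exact norm_sum_le _ _
      _ ≤ n * ∑ i, ‖v i‖ ^ 2 := by
          simpa using sq_sum_le_card_mul_sum_sq (s := Finset.univ) (f := fun i => ‖v i‖)
  rw [norm_smul, Real.norm_of_nonneg (by positivity), mul_pow]
  calc (1 / (n : ℝ)) ^ 2 * ‖∑ i, v i‖ ^ 2 ≤ (1 / (n : ℝ)) ^ 2 * (n * ∑ i, ‖v i‖ ^ 2) := by gcongr
    _ = (1 / (n : ℝ)) * ∑ i, ‖v i‖ ^ 2 := by field_simp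

theorem norm_smul_sub_sq_le {c δ r : ℝ} {a b : E} (hc : |c - 1| ≤ δ) (hab : ‖a - b‖ ≤ r) :
    ‖c • a - b‖ ^ 2 ≤ 2 * (δ ^ 2 * ‖a‖ ^ 2 + r ^ 2) := by
  have h : ‖c • a - b‖ ≤ δ * ‖a‖ + r :=
    calc ‖c • a - b‖ = ‖(c - 1) • a + (a - b)‖ := by rw [sub_smul, one_smul]; abel_nf
      _ ≤ ‖(c - 1) • a‖ + ‖a - b‖ := norm_add_le _ _
      _ ≤ δ * ‖a‖ + r := by rw [norm_smul, Real.norm_eq_abs]; gcongr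
  calc ‖c • a - b‖ ^ 2 ≤ (δ * ‖a‖ + r) ^ 2 := by gcongr
    _ ≤ 2 * ((δ * ‖a‖) ^ 2 + r ^ 2) := add_sq_le
    _ = 2 * (δ ^ 2 * ‖a‖ ^ 2 + r ^ 2) := by ring

theorem norm_weighted_sum_sub_average_sq_le {a b : Fin n → E} {π y r : Fin n → ℝ} {ε : ℝ}
    (hy : ∀ i, 0 < y i) (hyπ : ∀ i, |y i - π i| ≤ ε) (hab : ∀ i, ‖a i - b i‖ ≤ r i) :
    ‖∑ i, (π i / ((n : ℝ) * y i)) • a i - (1 / (n : ℝ)) • ∑ i, b i‖ ^ 2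
      ≤ (2 / (n : ℝ)) * ∑ i, (ε / y i) ^ 2 * ‖a i‖ ^ 2 + (2 / (n : ℝ)) * ∑ i, r i ^ 2 := by
  have hcoef : ∀ i, |π i / y i - 1| ≤ ε / y i := fun i => by
    rw [div_sub_one (hy i).ne', abs_div, abs_of_pos (hy i), abs_sub_comm]
    exact div_le_div_of_nonneg_right (hyπ i) (hy i).le
  have hsum : ∑ i, (π i / ((n : ℝ) * y i)) • a i - (1 / (n : ℝ)) • ∑ i, b i
      = (1 / (n : ℝ)) • ∑ i, ((π i / y i) • a i - b i) := by
    simp only [Finset.smul_sum, smul_sub, smul_smul, Finset.sum_sub_distrib]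
    congr 2 with i
    ring_nf
  rw [hsum]
  calc ‖(1 / (n : ℝ)) • ∑ i, ((π i / y i) • a i - b i)‖ ^ 2
      ≤ (1 / (n : ℝ)) * ∑ i, ‖(π i / y i) • a i - b i‖ ^ 2 := norm_average_sq_le _
    _ ≤ (1 / (n : ℝ)) * ∑ i, 2 * ((ε / y i) ^ 2 * ‖a i‖ ^ 2 + r i ^ 2) := by
        gcongr with i
        exact norm_smul_sub_sq_le (hcoef i) (hab i)
    _ = (2 / (n : ℝ)) * ∑ i, (ε / y i) ^ 2 * ‖a i‖ ^ 2 + (2 / (n : ℝ)) * ∑ i, r i ^ 2 := by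
        simp only [Finset.mul_sum, ← Finset.sum_add_distrib]
        exact Finset.sum_congr rfl fun i _ => by ring

end Average

section Gradient

variable {E : Type*} [NormedAddCommGroup E] [InnerProductSpace ℝ E] [CompleteSpace E]

theorem hasGradientAt_average {n : ℕ} {f : Fin n → E → ℝ} {x : E}
    (hf : ∀ i, DifferentiableAt ℝ (f i) x) :
    HasGradientAt (fun z => (1 / (n : ℝ)) * ∑ i, f i z)
      ((1 / (n : ℝ)) • ∑ i, gradient (f i) x) x := by
  rw [hasGradientAt_iff_hasFDerivAt, map_smul, map_sum]
  exact (HasFDerivAt.fun_sum fun i _ =>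
    hasGradientAt_iff_hasFDerivAt.mp (hf i).hasGradientAt).const_mul _

theorem image_add_le_of_lipschitz_gradient {F : E → ℝ} {L : ℝ} (hF : Differentiable ℝ F)
    (hLip : ∀ a b, ‖gradient F a - gradient F b‖ ≤ L * ‖a - b‖) (x v : E) :
    F (x + v) ≤ F x + inner ℝ (gradient F x) v + L / 2 * ‖v‖ ^ 2 := by
  have hline : ∀ t : ℝ, HasDerivAt (fun t : ℝ => F (x + t • v) - F x - t * inner ℝ (gradient F x) v)
      (inner ℝ (gradient F (x + t • v)) v - inner ℝ (gradient F x) v) t := by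
    intro t
    have hpath : HasDerivAt (fun t : ℝ => x + t • v) v t := by
      simpa using ((hasDerivAt_id t).smul_const v).const_add x
    have hF' := (hasGradientAt_iff_hasFDerivAt.mp (hF (x + t • v)).hasGradientAt).comp_hasDerivAt
      t hpath
    simpa using
      (hF'.sub_const (F x)).fun_sub ((hasDerivAt_id t).mul_const (inner ℝ (gradient F x) v))
  have hbound : ∀ t : ℝ, HasDerivAt (fun t : ℝ => L / 2 * ‖v‖ ^ 2 * t ^ 2) (L * ‖v‖ ^ 2 * t) t := by
    intro t
    exact ((hasDerivAt_pow 2 t).const_mul (L / 2 * ‖v‖ ^ 2)).congr_deriv (by push_cast; ring)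
  have key := image_le_of_deriv_right_le_deriv_boundary
    (fun t _ => (hline t).continuousAt.continuousWithinAt) (fun t _ => (hline t).hasDerivWithinAt)
    (by simp) (fun t _ => (hbound t).continuousAt.continuousWithinAt)
    (fun t _ => (hbound t).hasDerivWithinAt) ?_ (Set.right_mem_Icc.mpr zero_le_one)
  · simp only [one_smul, one_mul, one_pow, mul_one] at key
    linarith
  intro t ht
  rw [← inner_sub_left]
  calc inner ℝ (gradient F (x + t • v) - gradient F x) v
      ≤ ‖gradient F (x + t • v) - gradient F x‖ * ‖v‖ := real_inner_le_norm _ _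
    _ ≤ L * ‖t • v‖ * ‖v‖ := by gcongr; simpa using hLip (x + t • v) x
    _ = L * ‖v‖ ^ 2 * t := by rw [norm_smul, Real.norm_of_nonneg ht.1]; ring

theorem image_sub_smul_le_of_lipschitz_gradient {F : E → ℝ} {L γ : ℝ} (hF : Differentiable ℝ F)
    (hLip : ∀ a b, ‖gradient F a - gradient F b‖ ≤ L * ‖a - b‖) (hL : 0 ≤ L) (hγ : 0 ≤ γ)
    (x g : E) :
    F (x - γ • g) - F x ≤ (-γ / 2 + γ ^ 2 * L) * ‖gradient F x‖ ^ 2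
      + (γ ^ 2 * L + γ / 2) * ‖g - gradient F x‖ ^ 2 := by
  set G := gradient F x
  have hdesc := image_add_le_of_lipschitz_gradient hF hLip x (-(γ • g))
  rw [← sub_eq_add_neg, inner_neg_right, real_inner_smul_right, norm_neg, norm_smul,
    Real.norm_of_nonneg hγ] at hdesc
  have hinner : 2 * inner ℝ G g = ‖G‖ ^ 2 + ‖g‖ ^ 2 - ‖g - G‖ ^ 2 := by
    rw [norm_sub_sq_real, real_inner_comm]; ring
  have hg : ‖g‖ ^ 2 ≤ 2 * (‖G‖ ^ 2 + ‖g - G‖ ^ 2) := by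
    calc ‖g‖ ^ 2 ≤ (‖G‖ + ‖g - G‖) ^ 2 := by
          gcongr; simpa using norm_add_le G (g - G)
      _ ≤ 2 * (‖G‖ ^ 2 + ‖g - G‖ ^ 2) := add_sq_le
  nlinarith [mul_le_mul_of_nonneg_left hg (by positivity : 0 ≤ γ ^ 2 * L),
    mul_nonneg hγ (sq_nonneg ‖g‖)]

end Gradient

theorem stmt_6_general (n d : ℕ) (hn : 1 ≤ n) (hd : 1 ≤ d) (L : ℝ)
    (f : Fin n → EuclideanSpace ℝ (Fin d) → ℝ)
    (hdiff : ∀ i, Differentiable ℝ (f i))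
    (hLip : ∀ i x z, ‖gradient (f i) x - gradient (f i) z‖ ≤ L * ‖x - z‖)
    (θ : Fin n → EuclideanSpace ℝ (Fin d))
    (π : Fin n → ℝ)
    (y : Fin n → ℝ) (hy : ∀ i, 0 < y i)
    (ε : ℝ) (hyπ : ∀ i, |y i - π i| ≤ ε)
    (γ : ℝ) (hγ : 0 < γ) :
    let F : EuclideanSpace ℝ (Fin d) → ℝ := fun x => (1 / (n : ℝ)) * ∑ i, f i x
    let θhat : EuclideanSpace ℝ (Fin d) := ∑ i, π i • θ i
    let θplus : EuclideanSpace ℝ (Fin d) :=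
      θhat - γ • ∑ i, (π i / ((n : ℝ) * y i)) • gradient (f i) (θ i)
    F θplus - F θhat ≤ (-γ / 2 + γ ^ 2 * L) * ‖gradient F θhat‖ ^ 2
      + (γ ^ 2 * L + γ / 2) * (2 / (n : ℝ))
          * ∑ i, (ε / y i) ^ 2 * ‖gradient (f i) (θ i)‖ ^ 2
      + (γ ^ 2 * L + γ / 2) * (2 * L ^ 2 / (n : ℝ)) * ∑ i, ‖θ i - θhat‖ ^ 2 := by
  intro F θhat θplus
  have : Nonempty (Fin d) := ⟨⟨0, hd⟩⟩
  have hL : 0 ≤ L := nonneg_of_norm_sub_le_mul_norm_sub (hLip ⟨0, hn⟩)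
  have hgradF : ∀ x, HasGradientAt F ((1 / (n : ℝ)) • ∑ i, gradient (f i) x) x :=
    fun x => hasGradientAt_average fun i => hdiff i x
  have hLipF : ∀ a b, ‖gradient F a - gradient F b‖ ≤ L * ‖a - b‖ := by
    intro a b
    rw [(hgradF a).gradient, (hgradF b).gradient, ← smul_sub, ← Finset.sum_sub_distrib]
    exact norm_average_le hn fun i => hLip i a b
  have hstep := image_sub_smul_le_of_lipschitz_gradient (fun x => (hgradF x).differentiableAt)
    hLipF hL hγ.le θhat (∑ i, (π i / ((n : ℝ) * y i)) • gradient (f i) (θ i))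
  have herr := norm_weighted_sum_sub_average_sq_le hy hyπ fun i => hLip i (θ i) θhat
  rw [← (hgradF θhat).gradient] at herr
  simp only [mul_pow, ← Finset.mul_sum] at herr
  refine hstep.trans ?_
  have hC : 0 ≤ γ ^ 2 * L + γ / 2 := by positivity
  calc _ ≤ _ := add_le_add_right (mul_le_mul_of_nonneg_left herr hC) _
    _ = _ := by ring

/-- Descent inequality for the weighted average iterate of Di-DGD:
with `θ̂ = ∑ π_i θ_i` and `θ̂⁺ = θ̂ − γ ∑ (π_i/(n y_i)) ∇f_i(θ_i)`,
`F(θ̂⁺) − F(θ̂) ≤ (−γ/2 + γ²L)‖∇F(θ̂)‖² + (γ²L + γ/2)(2/n)∑ (ε/y_i)²‖∇f_i(θ_i)‖²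
  + (γ²L + γ/2)(2L²/n)∑ ‖θ_i − θ̂‖²`. -/
theorem stmt_6 (n d : ℕ) (hn : 1 ≤ n) (hd : 1 ≤ d) (L : ℝ)
    (f : Fin n → EuclideanSpace ℝ (Fin d) → ℝ)
    (hdiff : ∀ i, Differentiable ℝ (f i))
    (hLip : ∀ i x z, ‖gradient (f i) x - gradient (f i) z‖ ≤ L * ‖x - z‖)
    (θ : Fin n → EuclideanSpace ℝ (Fin d))
    (π : Fin n → ℝ) (hπ_pos : ∀ i, 0 < π i) (hπ_sum : ∑ i, π i = 1)
    (y : Fin n → ℝ) (hy : ∀ i, 0 < y i)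
    (ε : ℝ) (hε : 0 ≤ ε) (hyπ : ∀ i, |y i - π i| ≤ ε)
    (γ : ℝ) (hγ : 0 < γ) :
    let F : EuclideanSpace ℝ (Fin d) → ℝ := fun x => (1 / (n : ℝ)) * ∑ i, f i x
    let θhat : EuclideanSpace ℝ (Fin d) := ∑ i, π i • θ i
    let θplus : EuclideanSpace ℝ (Fin d) :=
      θhat - γ • ∑ i, (π i / ((n : ℝ) * y i)) • gradient (f i) (θ i)
    F θplus - F θhat ≤ (-γ / 2 + γ ^ 2 * L) * ‖gradient F θhat‖ ^ 2
      + (γ ^ 2 * L + γ / 2) * (2 / (n : ℝ))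
          * ∑ i, (ε / y i) ^ 2 * ‖gradient (f i) (θ i)‖ ^ 2
      + (γ ^ 2 * L + γ / 2) * (2 * L ^ 2 / (n : ℝ)) * ∑ i, ‖θ i - θhat‖ ^ 2 :=
  stmt_6_general n d hn hd L f hdiff hLip θ π y hy ε hyπ γ hγ
end

section
/- Let θ̂⁺ = θ̂ − γ ∑_{i=1}^n (π_i/(n y_i)) ∇f_i(θ_i), where θ̂ = ∑_{i=1}^n π_i θ_i. If 0 < γ ≤ 1/(4L), then F(θ̂⁺) − F(θ̂) ≤ −(γ/4)‖∇F(θ̂)‖² + (3γ/(2n))∑_{i=1}^n (ε/y_i)²‖∇f_i(θ_i)‖² + (3γL²/(2n))∑_{i=1}^n ‖θ_i − θ̂‖². -/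
/-!
For a function with `L`-Lipschitz gradient, `ψ t = f (x + t v) - t ⟪∇f x, v⟫ - L t² ‖v‖² / 2`
is antitone on `[0, 1]`, which is the descent lemma
`f y - f x ≤ ⟪∇f x, y - x⟫ + L/2 ‖y - x‖²`. Applied to the averaged objective `F` and an inexact
step `x - γ g`, it gives with `γ L ≤ 1/4` and Young's inequality
`F (x - γ g) - F x ≤ -(γ/4) ‖∇F x‖² + (3γ/4) ‖g - ∇F x‖²`.
Here `g - ∇F θ̂` is the average of `(π_i/y_i - 1) ∇f_i(θ_i) + (∇f_i(θ_i) - ∇f_i(θ̂))`, of norm at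
most `(ε/y_i) ‖∇f_i(θ_i)‖ + L ‖θ_i - θ̂‖`; convexity of `‖·‖²` and `(a + b)² ≤ 2a² + 2b²` bound
its square.
-/

open Finset
open scoped Gradient RealInnerProductSpace

section Descent

variable {E : Type*} [NormedAddCommGroup E] [InnerProductSpace ℝ E] [CompleteSpace E]

theorem HasGradientAt.hasDerivAt_comp_add_smul {f : E → ℝ} {g x v : E} {t : ℝ}
    (h : HasGradientAt f g (x + t • v)) :
    HasDerivAt (fun s : ℝ => f (x + s • v)) ⟪g, v⟫ t := by
  have hline : HasDerivAt (fun s : ℝ => x + s • v) v t := by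
    simpa using ((hasDerivAt_id t).smul_const v).const_add x
  exact (h.hasFDerivAt.comp_hasDerivAt t hline).congr_deriv (by simp)

theorem sub_le_inner_gradient_add_of_lipschitz_gradient {f : E → ℝ} {L : ℝ}
    (hf : Differentiable ℝ f) (hLip : ∀ x z, ‖∇ f x - ∇ f z‖ ≤ L * ‖x - z‖) (x y : E) :
    f y - f x ≤ ⟪∇ f x, y - x⟫ + L / 2 * ‖y - x‖ ^ 2 := by
  set v := y - x
  let ψ : ℝ → ℝ := fun t => f (x + t • v) - t * ⟪∇ f x, v⟫ - L / 2 * t ^ 2 * ‖v‖ ^ 2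
  have hψ : ∀ t, HasDerivAt ψ (⟪∇ f (x + t • v), v⟫ - ⟪∇ f x, v⟫ - L * t * ‖v‖ ^ 2) t := by
    intro t
    have hquad := ((hasDerivAt_pow 2 t).const_mul (L / 2)).mul_const (‖v‖ ^ 2)
    refine ((((hf _).hasGradientAt.hasDerivAt_comp_add_smul).sub
      ((hasDerivAt_id t).mul_const ⟪∇ f x, v⟫)).sub hquad).congr_deriv ?_
    simp only [one_mul, Nat.cast_ofNat, Nat.add_one_sub_one, pow_one]
    ring
  have hψ_anti : AntitoneOn ψ (Set.Icc 0 1) := by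
    refine antitoneOn_of_hasDerivWithinAt_nonpos (convex_Icc 0 1)
      (HasDerivAt.continuousOn fun t _ => hψ t) (fun t _ => (hψ t).hasDerivWithinAt) ?_
    intro t ht
    rw [interior_Icc] at ht
    have hstep : ⟪∇ f (x + t • v) - ∇ f x, v⟫ ≤ L * t * ‖v‖ ^ 2 :=
      calc ⟪∇ f (x + t • v) - ∇ f x, v⟫
          ≤ ‖∇ f (x + t • v) - ∇ f x‖ * ‖v‖ := real_inner_le_norm _ _
        _ ≤ L * ‖(x + t • v) - x‖ * ‖v‖ := by gcongr; exact hLip _ _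
        _ = L * t * ‖v‖ ^ 2 := by
          rw [add_sub_cancel_left, norm_smul, Real.norm_of_nonneg ht.1.le]; ring
    rw [inner_sub_left] at hstep
    linarith
  have h01 := hψ_anti (by simp) (by simp) zero_le_one
  simp only [ψ, v, zero_smul, add_zero, one_smul, add_sub_cancel] at h01
  linarith

theorem sub_le_of_inexact_gradient_step {f : E → ℝ} {L γ : ℝ} (hf : Differentiable ℝ f)
    (hLip : ∀ x z, ‖∇ f x - ∇ f z‖ ≤ L * ‖x - z‖) (hL : 0 ≤ L) (hγ : 0 ≤ γ)
    (hγL : γ * L ≤ 1 / 4) (x g : E) :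
    f (x - γ • g) - f x ≤ -(γ / 4) * ‖∇ f x‖ ^ 2 + 3 * γ / 4 * ‖g - ∇ f x‖ ^ 2 := by
  set a := ∇ f x
  set e := g - a
  have hdescent := sub_le_inner_gradient_add_of_lipschitz_gradient hf hLip x (x - γ • g)
  rw [sub_sub_cancel_left, inner_neg_right, inner_smul_right, norm_neg, norm_smul,
    Real.norm_of_nonneg hγ] at hdescent
  have hg : g = a + e := (add_sub_cancel a g).symm
  have hinner : ⟪a, g⟫ = ‖a‖ ^ 2 + ⟪a, e⟫ := by
    rw [hg, inner_add_right, real_inner_self_eq_norm_sq]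
  have hcross : -⟪a, e⟫ ≤ (‖a‖ ^ 2 + ‖e‖ ^ 2) / 2 := by
    nlinarith [neg_le_of_abs_le (abs_real_inner_le_norm a e), sq_nonneg (‖a‖ - ‖e‖)]
  have hnorm : ‖g‖ ^ 2 ≤ 2 * (‖a‖ ^ 2 + ‖e‖ ^ 2) :=
    calc ‖g‖ ^ 2 ≤ (‖a‖ + ‖e‖) ^ 2 := by rw [hg]; gcongr; exact norm_add_le a e
      _ ≤ 2 * (‖a‖ ^ 2 + ‖e‖ ^ 2) := add_sq_le
  have hquad : L / 2 * (γ * ‖g‖) ^ 2 ≤ γ / 4 * (‖a‖ ^ 2 + ‖e‖ ^ 2) := by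
    have : L / 2 * (γ * ‖g‖) ^ 2 ≤ γ * (γ * L) * (‖a‖ ^ 2 + ‖e‖ ^ 2) := by
      rw [mul_pow]; nlinarith [mul_nonneg hL (sq_nonneg γ)]
    nlinarith [mul_nonneg hγ (add_nonneg (sq_nonneg ‖a‖) (sq_nonneg ‖e‖))]
  nlinarith [mul_le_mul_of_nonneg_left hcross hγ]

end Descent

section Average

variable {ι : Type*} [Fintype ι]

theorem norm_average_le_of_forall_norm_le {E : Type*} [SeminormedAddCommGroup E]
    [NormedSpace ℝ E] {w : ι → E} {B : ℝ} (hB : 0 ≤ B) (hw : ∀ i, ‖w i‖ ≤ B) :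
    ‖(1 / (Fintype.card ι : ℝ)) • ∑ i, w i‖ ≤ B :=
  calc ‖(1 / (Fintype.card ι : ℝ)) • ∑ i, w i‖
      ≤ 1 / (Fintype.card ι : ℝ) * (Fintype.card ι * B) := by
        rw [norm_smul, Real.norm_of_nonneg (by positivity)]
        gcongr
        simpa using norm_sum_le_of_le univ fun i _ => hw i
    _ = Fintype.card ι / (Fintype.card ι : ℝ) * B := by ring
    _ ≤ B := mul_le_of_le_one_left hB (div_self_le_one _)

theorem norm_average_sq_le_s7 {E : Type*} [SeminormedAddCommGroup E] [NormedSpace ℝ E]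
    (w : ι → E) :
    ‖(1 / (Fintype.card ι : ℝ)) • ∑ i, w i‖ ^ 2 ≤ 1 / (Fintype.card ι : ℝ) * ∑ i, ‖w i‖ ^ 2 :=
  calc ‖(1 / (Fintype.card ι : ℝ)) • ∑ i, w i‖ ^ 2
      ≤ (1 / (Fintype.card ι : ℝ)) ^ 2 * (Fintype.card ι * ∑ i, ‖w i‖ ^ 2) := by
        rw [norm_smul, Real.norm_of_nonneg (by positivity), mul_pow]
        gcongr
        calc ‖∑ i, w i‖ ^ 2 ≤ (∑ i, ‖w i‖) ^ 2 := by gcongr; exact norm_sum_le _ _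
          _ ≤ _ := by simpa using sq_sum_le_card_mul_sum_sq (s := univ) (f := fun i => ‖w i‖)
    _ = Fintype.card ι / (Fintype.card ι : ℝ) * (1 / Fintype.card ι * ∑ i, ‖w i‖ ^ 2) := by
        ring
    _ ≤ 1 / (Fintype.card ι : ℝ) * ∑ i, ‖w i‖ ^ 2 :=
        mul_le_of_le_one_left (by positivity) (div_self_le_one _)

variable {E : Type*} [NormedAddCommGroup E] [InnerProductSpace ℝ E] [CompleteSpace E]

theorem norm_div_smul_sub_le {E : Type*} [SeminormedAddCommGroup E] [NormedSpace ℝ E]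
    {p q ε : ℝ} (hq : 0 < q) (hpq : |q - p| ≤ ε) (a b : E) :
    ‖(p / q) • a - b‖ ≤ ε / q * ‖a‖ + ‖a - b‖ := by
  have hcoeff : |p / q - 1| ≤ ε / q := by
    rw [div_sub_one hq.ne', abs_div, abs_of_pos hq, abs_sub_comm]
    gcongr
  calc ‖(p / q) • a - b‖ = ‖(p / q - 1) • a + (a - b)‖ := by rw [sub_smul, one_smul]; abel_nf
    _ ≤ |p / q - 1| * ‖a‖ + ‖a - b‖ := by
      rw [← Real.norm_eq_abs, ← norm_smul]; exact norm_add_le _ _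
    _ ≤ ε / q * ‖a‖ + ‖a - b‖ := by gcongr

theorem hasGradientAt_const_mul_sum {f : ι → E → ℝ} (hf : ∀ i, Differentiable ℝ (f i))
    (c : ℝ) (x : E) :
    HasGradientAt (fun x => c * ∑ i, f i x) (c • ∑ i, ∇ (f i) x) x := by
  have hsum : HasFDerivAt (fun x => ∑ i, f i x)
      (∑ i, InnerProductSpace.toDual ℝ E (∇ (f i) x)) x :=
    HasFDerivAt.fun_sum fun i _ => (hf i x).hasGradientAt.hasFDerivAt
  rw [hasGradientAt_iff_hasFDerivAt]
  exact (hsum.const_mul c).congr_fderiv (by simp [map_sum, map_smul])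

theorem norm_gradient_average_sub_le {f : ι → E → ℝ} {L : ℝ} (hf : ∀ i, Differentiable ℝ (f i))
    (hLip : ∀ i x z, ‖∇ (f i) x - ∇ (f i) z‖ ≤ L * ‖x - z‖) (hL : 0 ≤ L) (x z : E) :
    ‖∇ (fun x => 1 / (Fintype.card ι : ℝ) * ∑ i, f i x) x
      - ∇ (fun x => 1 / (Fintype.card ι : ℝ) * ∑ i, f i x) z‖ ≤ L * ‖x - z‖ := by
  rw [(hasGradientAt_const_mul_sum hf _ x).gradient, (hasGradientAt_const_mul_sum hf _ z).gradient,
    ← smul_sub, ← sum_sub_distrib]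
  exact norm_average_le_of_forall_norm_le (by positivity) fun i => hLip i x z

theorem norm_reweighted_gradient_sub_gradient_average_sq_le {f : ι → E → ℝ} {L ε : ℝ}
    (hf : ∀ i, Differentiable ℝ (f i))
    (hLip : ∀ i x z, ‖∇ (f i) x - ∇ (f i) z‖ ≤ L * ‖x - z‖) (θ : ι → E) (π y : ι → ℝ)
    (hy : ∀ i, 0 < y i) (hyπ : ∀ i, |y i - π i| ≤ ε) (x : E) :
    ‖∑ i, (π i / (Fintype.card ι * y i)) • ∇ (f i) (θ i)
        - ∇ (fun x => 1 / (Fintype.card ι : ℝ) * ∑ i, f i x) x‖ ^ 2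
      ≤ 2 / (Fintype.card ι : ℝ) * ∑ i, (ε / y i) ^ 2 * ‖∇ (f i) (θ i)‖ ^ 2
        + 2 * L ^ 2 / (Fintype.card ι : ℝ) * ∑ i, ‖θ i - x‖ ^ 2 := by
  set c : ℝ := (Fintype.card ι : ℝ)
  have hrw : ∑ i, (π i / (c * y i)) • ∇ (f i) (θ i) - ∇ (fun x => 1 / c * ∑ i, f i x) x
      = (1 / c) • ∑ i, ((π i / y i) • ∇ (f i) (θ i) - ∇ (f i) x) := by
    rw [(hasGradientAt_const_mul_sum hf _ x).gradient, sum_sub_distrib, smul_sub, smul_sum,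
      smul_sum]
    congr 1
    refine Finset.sum_congr rfl fun i _ => ?_
    rw [smul_smul, one_div_mul_eq_div, div_div, mul_comm c]
  have hterm : ∀ i, ‖(π i / y i) • ∇ (f i) (θ i) - ∇ (f i) x‖ ^ 2
      ≤ 2 * ((ε / y i) ^ 2 * ‖∇ (f i) (θ i)‖ ^ 2) + 2 * L ^ 2 * ‖θ i - x‖ ^ 2 := fun i =>
    calc ‖(π i / y i) • ∇ (f i) (θ i) - ∇ (f i) x‖ ^ 2
        ≤ (ε / y i * ‖∇ (f i) (θ i)‖ + L * ‖θ i - x‖) ^ 2 := by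
          gcongr
          exact (norm_div_smul_sub_le (hy i) (hyπ i) _ _).trans (by gcongr; exact hLip i _ _)
      _ ≤ _ := by nlinarith [add_sq_le (a := ε / y i * ‖∇ (f i) (θ i)‖) (b := L * ‖θ i - x‖)]
  calc _ = ‖(1 / c) • ∑ i, ((π i / y i) • ∇ (f i) (θ i) - ∇ (f i) x)‖ ^ 2 := by rw [hrw]
    _ ≤ 1 / c * ∑ i, ‖(π i / y i) • ∇ (f i) (θ i) - ∇ (f i) x‖ ^ 2 := norm_average_sq_le_s7 _
    _ ≤ 1 / c * ∑ i, (2 * ((ε / y i) ^ 2 * ‖∇ (f i) (θ i)‖ ^ 2) + 2 * L ^ 2 * ‖θ i - x‖ ^ 2) := by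
      gcongr with i; exact hterm i
    _ = _ := by rw [sum_add_distrib, ← mul_sum, ← mul_sum]; ring

end Average

theorem stmt_7_general (n d : ℕ) (L : ℝ)
    (f : Fin n → EuclideanSpace ℝ (Fin d) → ℝ)
    (hdiff : ∀ i, Differentiable ℝ (f i))
    (hLip : ∀ i x z, ‖gradient (f i) x - gradient (f i) z‖ ≤ L * ‖x - z‖)
    (θ : Fin n → EuclideanSpace ℝ (Fin d))
    (π : Fin n → ℝ)
    (y : Fin n → ℝ) (hy : ∀ i, 0 < y i)
    (ε : ℝ) (hyπ : ∀ i, |y i - π i| ≤ ε)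
    (γ : ℝ) (hγ : 0 < γ) (hγL : γ ≤ 1 / (4 * L)) :
    let F : EuclideanSpace ℝ (Fin d) → ℝ := fun x => (1 / (n : ℝ)) * ∑ i, f i x
    let θhat : EuclideanSpace ℝ (Fin d) := ∑ i, π i • θ i
    let θplus : EuclideanSpace ℝ (Fin d) :=
      θhat - γ • ∑ i, (π i / ((n : ℝ) * y i)) • gradient (f i) (θ i)
    F θplus - F θhat ≤ -(γ / 4) * ‖gradient F θhat‖ ^ 2
      + (3 * γ / (2 * (n : ℝ))) * ∑ i, (ε / y i) ^ 2 * ‖gradient (f i) (θ i)‖ ^ 2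
      + (3 * γ * L ^ 2 / (2 * (n : ℝ))) * ∑ i, ‖θ i - θhat‖ ^ 2 := by
  intro F θhat θplus
  have hL : 0 < L := by
    by_contra! hL
    linarith [div_nonpos_of_nonneg_of_nonpos zero_le_one (by linarith : 4 * L ≤ 0)]
  have hγL' : γ * L ≤ 1 / 4 := by
    rw [le_div_iff₀ (by positivity)] at hγL
    linarith
  have hF : F = fun x => 1 / (Fintype.card (Fin n) : ℝ) * ∑ i, f i x := by
    simp only [F, Fintype.card_fin]
  have hFdiff : Differentiable ℝ F := by
    rw [hF]; exact fun x => (hasGradientAt_const_mul_sum hdiff _ x).differentiableAt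
  have hFLip : ∀ x z, ‖∇ F x - ∇ F z‖ ≤ L * ‖x - z‖ := by
    rw [hF]; exact norm_gradient_average_sub_le hdiff hLip hL.le
  have herror := norm_reweighted_gradient_sub_gradient_average_sq_le hdiff hLip θ π y hy hyπ θhat
  rw [← hF, Fintype.card_fin] at herror
  calc F θplus - F θhat
      ≤ -(γ / 4) * ‖∇ F θhat‖ ^ 2
        + 3 * γ / 4 * ‖∑ i, (π i / ((n : ℝ) * y i)) • ∇ (f i) (θ i) - ∇ F θhat‖ ^ 2 :=
        sub_le_of_inexact_gradient_step hFdiff hFLip hL.le hγ.le hγL' _ _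
    _ ≤ -(γ / 4) * ‖∇ F θhat‖ ^ 2 + 3 * γ / 4
        * (2 / (n : ℝ) * ∑ i, (ε / y i) ^ 2 * ‖∇ (f i) (θ i)‖ ^ 2
          + 2 * L ^ 2 / (n : ℝ) * ∑ i, ‖θ i - θhat‖ ^ 2) := by gcongr
    _ = _ := by ring

/-- Simplified descent inequality under the stepsize restriction
`0 < γ ≤ 1/(4L)`:
`F(θ̂⁺) − F(θ̂) ≤ −(γ/4)‖∇F(θ̂)‖² + (3γ/(2n))∑ (ε/y_i)²‖∇f_i(θ_i)‖²
  + (3γL²/(2n))∑ ‖θ_i − θ̂‖²`. -/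
theorem stmt_7 (n d : ℕ) (hn : 1 ≤ n) (hd : 1 ≤ d) (L : ℝ) (hL : 0 < L)
    (f : Fin n → EuclideanSpace ℝ (Fin d) → ℝ)
    (hdiff : ∀ i, Differentiable ℝ (f i))
    (hLip : ∀ i x z, ‖gradient (f i) x - gradient (f i) z‖ ≤ L * ‖x - z‖)
    (θ : Fin n → EuclideanSpace ℝ (Fin d))
    (π : Fin n → ℝ) (hπ_pos : ∀ i, 0 < π i) (hπ_sum : ∑ i, π i = 1)
    (y : Fin n → ℝ) (hy : ∀ i, 0 < y i)
    (ε : ℝ) (hε : 0 ≤ ε) (hyπ : ∀ i, |y i - π i| ≤ ε)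
    (γ : ℝ) (hγ : 0 < γ) (hγL : γ ≤ 1 / (4 * L)) :
    let F : EuclideanSpace ℝ (Fin d) → ℝ := fun x => (1 / (n : ℝ)) * ∑ i, f i x
    let θhat : EuclideanSpace ℝ (Fin d) := ∑ i, π i • θ i
    let θplus : EuclideanSpace ℝ (Fin d) :=
      θhat - γ • ∑ i, (π i / ((n : ℝ) * y i)) • gradient (f i) (θ i)
    F θplus - F θhat ≤ -(γ / 4) * ‖gradient F θhat‖ ^ 2
      + (3 * γ / (2 * (n : ℝ))) * ∑ i, (ε / y i) ^ 2 * ‖gradient (f i) (θ i)‖ ^ 2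
      + (3 * γ * L ^ 2 / (2 * (n : ℝ))) * ∑ i, ‖θ i - θhat‖ ^ 2 :=
  stmt_7_general n d L f hdiff hLip θ π y hy ε hyπ γ hγ hγL
end

section
/- For every θ̂ ∈ ℝ^d: ‖∑_{i=1}^n (π_i/(n y_i)) ∇f_i(θ_i) − ∇F(θ̂)‖² ≤ (2/n)∑_{i=1}^n (ε/y_i)²‖∇f_i(θ_i)‖² + (2L²/n)∑_{i=1}^n ‖θ_i − θ̂‖². -/
/-!
Since `∇F(θ̂) = (1/n) ∑ ∇f_i(θ̂)`, the error splits as `A + B` with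
`A = (1/n) ∑ ((π_i - y_i)/y_i) ∇f_i(θ_i)` and `B = (1/n) ∑ (∇f_i(θ_i) - ∇f_i(θ̂))`.
Then `‖A + B‖² ≤ 2‖A‖² + 2‖B‖²`, and the square of an average is at most the average of the
squares; termwise, `|π_i - y_i| ≤ ε` bounds the summands of `A` and `L`-smoothness those of `B`.
-/

open Finset

section Gradient

variable {E : Type*} [NormedAddCommGroup E] [InnerProductSpace ℝ E] [CompleteSpace E]
  {x : E}

theorem HasGradientAt.fun_sum {ι : Type*} {s : Finset ι} {f : ι → E → ℝ} {f' : ι → E}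
    (hf : ∀ i ∈ s, HasGradientAt (f i) (f' i) x) :
    HasGradientAt (fun x => ∑ i ∈ s, f i x) (∑ i ∈ s, f' i) x := by
  simp only [hasGradientAt_iff_hasFDerivAt, map_sum] at hf ⊢
  exact HasFDerivAt.fun_sum hf

theorem HasGradientAt.const_mul {f : E → ℝ} {f' : E} (hf : HasGradientAt f f' x) (c : ℝ) :
    HasGradientAt (fun x => c * f x) (c • f') x := by
  rw [hasGradientAt_iff_hasFDerivAt] at hf ⊢
  simpa only [map_smul] using hf.const_mul c

end Gradient

theorem norm_inv_card_smul_sum_sq_le {E ι : Type*} [SeminormedAddCommGroup E] [NormedSpace ℝ E]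
    (s : Finset ι) (v : ι → E) :
    ‖(#s : ℝ)⁻¹ • ∑ i ∈ s, v i‖ ^ 2 ≤ (#s : ℝ)⁻¹ * ∑ i ∈ s, ‖v i‖ ^ 2 := by
  rcases s.eq_empty_or_nonempty with rfl | hs
  · simp
  have hcard : (0 : ℝ) < #s := by exact_mod_cast hs.card_pos
  calc ‖(#s : ℝ)⁻¹ • ∑ i ∈ s, v i‖ ^ 2
      ≤ ((#s : ℝ)⁻¹ * ∑ i ∈ s, ‖v i‖) ^ 2 := by
        rw [norm_smul, Real.norm_of_nonneg (by positivity)]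
        gcongr
        exact norm_sum_le _ _
    _ ≤ (#s : ℝ)⁻¹ ^ 2 * (#s * ∑ i ∈ s, ‖v i‖ ^ 2) := by
        rw [mul_pow]
        gcongr
        exact sq_sum_le_card_mul_sum_sq
    _ = (#s : ℝ)⁻¹ * ∑ i ∈ s, ‖v i‖ ^ 2 := by
        field_simp

theorem norm_add_sq_le_two_mul {E : Type*} [SeminormedAddCommGroup E] (a b : E) :
    ‖a + b‖ ^ 2 ≤ 2 * (‖a‖ ^ 2 + ‖b‖ ^ 2) :=
  (pow_le_pow_left₀ (norm_nonneg _) (norm_add_le a b) 2).trans add_sq_le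

theorem stmt_8_general (n d : ℕ) (L : ℝ)
    (f : Fin n → EuclideanSpace ℝ (Fin d) → ℝ)
    (hdiff : ∀ i, Differentiable ℝ (f i))
    (hLip : ∀ i x z, ‖gradient (f i) x - gradient (f i) z‖ ≤ L * ‖x - z‖)
    (θ : Fin n → EuclideanSpace ℝ (Fin d))
    (π : Fin n → ℝ)
    (y : Fin n → ℝ) (hy : ∀ i, 0 < y i)
    (ε : ℝ) (hyπ : ∀ i, |y i - π i| ≤ ε) :
    let F : EuclideanSpace ℝ (Fin d) → ℝ := fun x => (1 / (n : ℝ)) * ∑ i, f i x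
    ∀ θhat : EuclideanSpace ℝ (Fin d),
      ‖(∑ i, (π i / ((n : ℝ) * y i)) • gradient (f i) (θ i)) - gradient F θhat‖ ^ 2
        ≤ (2 / (n : ℝ)) * ∑ i, (ε / y i) ^ 2 * ‖gradient (f i) (θ i)‖ ^ 2
          + (2 * L ^ 2 / (n : ℝ)) * ∑ i, ‖θ i - θhat‖ ^ 2 := by
  intro F θhat
  set g := fun i => gradient (f i) (θ i)
  set h := fun i => gradient (f i) θhat
  have hcard : (#(univ : Finset (Fin n)) : ℝ) = n := by simp
  have hF : gradient F θhat = (n : ℝ)⁻¹ • ∑ i, h i := by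
    rw [← one_div]
    exact (HasGradientAt.fun_sum fun i _ => (hdiff i θhat).hasGradientAt).const_mul _ |>.gradient
  have hsplit : ∑ i, (π i / (n * y i)) • g i - gradient F θhat
      = (n : ℝ)⁻¹ • ∑ i, ((π i - y i) / y i) • g i + (n : ℝ)⁻¹ • ∑ i, (g i - h i) := by
    rw [hF, ← smul_add, ← sum_add_distrib, smul_sum, smul_sum, ← sum_sub_distrib]
    refine sum_congr rfl fun i _ => ?_
    have hcoef : π i / (n * y i) = (n : ℝ)⁻¹ * ((π i - y i) / y i) + (n : ℝ)⁻¹ := by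
      field_simp [(hy i).ne']
      ring
    rw [hcoef]
    module
  have hweight (i : Fin n) : ‖((π i - y i) / y i) • g i‖ ^ 2 ≤ (ε / y i) ^ 2 * ‖g i‖ ^ 2 := by
    rw [norm_smul, mul_pow, Real.norm_eq_abs, abs_div, abs_of_pos (hy i), abs_sub_comm]
    gcongr
    exacts [div_nonneg (abs_nonneg _) (hy i).le, (hy i).le, hyπ i]
  have hsmooth (i : Fin n) : ‖g i - h i‖ ^ 2 ≤ L ^ 2 * ‖θ i - θhat‖ ^ 2 := by
    rw [← mul_pow]
    exact pow_le_pow_left₀ (norm_nonneg _) (hLip i _ _) 2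
  rw [hsplit]
  calc _ ≤ 2 * ((n : ℝ)⁻¹ * ∑ i, ‖((π i - y i) / y i) • g i‖ ^ 2
          + (n : ℝ)⁻¹ * ∑ i, ‖g i - h i‖ ^ 2) := by
        refine (norm_add_sq_le_two_mul _ _).trans ?_
        rw [← hcard]
        gcongr <;> exact norm_inv_card_smul_sum_sq_le _ _
    _ ≤ 2 * ((n : ℝ)⁻¹ * ∑ i, (ε / y i) ^ 2 * ‖g i‖ ^ 2
          + (n : ℝ)⁻¹ * ∑ i, L ^ 2 * ‖θ i - θhat‖ ^ 2) := by
        gcongr with i _ i _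
        exacts [hweight i, hsmooth i]
    _ = _ := by
        rw [← mul_sum]
        ring

/-- Gradient approximation bound: for every `θ̂ ∈ ℝ^d`,
`‖∑ (π_i/(n y_i)) ∇f_i(θ_i) − ∇F(θ̂)‖² ≤ (2/n)∑ (ε/y_i)²‖∇f_i(θ_i)‖²
  + (2L²/n)∑ ‖θ_i − θ̂‖²`. -/
theorem stmt_8 (n d : ℕ) (hn : 1 ≤ n) (hd : 1 ≤ d) (L : ℝ)
    (f : Fin n → EuclideanSpace ℝ (Fin d) → ℝ)
    (hdiff : ∀ i, Differentiable ℝ (f i))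
    (hLip : ∀ i x z, ‖gradient (f i) x - gradient (f i) z‖ ≤ L * ‖x - z‖)
    (θ : Fin n → EuclideanSpace ℝ (Fin d))
    (π : Fin n → ℝ)
    (y : Fin n → ℝ) (hy : ∀ i, 0 < y i)
    (ε : ℝ) (hε : 0 ≤ ε) (hyπ : ∀ i, |y i - π i| ≤ ε) :
    let F : EuclideanSpace ℝ (Fin d) → ℝ := fun x => (1 / (n : ℝ)) * ∑ i, f i x
    ∀ θhat : EuclideanSpace ℝ (Fin d),
      ‖(∑ i, (π i / ((n : ℝ) * y i)) • gradient (f i) (θ i)) - gradient F θhat‖ ^ 2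
        ≤ (2 / (n : ℝ)) * ∑ i, (ε / y i) ^ 2 * ‖gradient (f i) (θ i)‖ ^ 2
          + (2 * L ^ 2 / (n : ℝ)) * ∑ i, ‖θ i - θhat‖ ^ 2 :=
  stmt_8_general n d L f hdiff hLip θ π y hy ε hyπ
end

section
/- Let Θ ∈ ℝ^{n×d} have rows θ_1, …, θ_n, let 𝐆 ∈ ℝ^{n×d} stack ∇f_1(θ_1), …, ∇f_n(θ_n) as rows, let Ỹ = Diag(y_1, …, y_n) with y_i > 0, let D = ∑_{i=1}^n 1/y_i², let θ̂ = ∑_{i=1}^n π_i θ_i, and define the update Θ⁺ = AΘ − (γ/n)Ỹ^{-1}𝐆. If 0 < γ ≤ nρ/(4L√(C_{π1}D)), then (1/n)‖(I_n − 𝟙πᵀ)Θ⁺‖_F² ≤ (1 − ρ/2)·(1/n)‖(I_n − 𝟙πᵀ)Θ‖_F² + (4 C_{π1} D/(n²ρ)) γ² ς² + (2 C_{π1} D/(n³ρ)) γ² ‖∇F(θ̂)‖², where C_{π1} = ∑_{i=1}^n [(1−π_i)² + (n−1)π_i²]. -/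
/-!
Write `e_i = θ_i - θ̂` and `w_i = (γ / (n y_i)) ∇f_i(θ_i)`. Since `A` is row-stochastic with left
eigenvector `π`, row `i` of `(I - 𝟙πᵀ)Θ⁺` is `u_i + v_i` with `u = (A - 𝟙πᵀ)e` and
`v_i = ∑ π_j w_j - w_i`. The spectral bound gives `‖u‖_F ≤ (1 - ρ)‖e‖_F`, and the triangle
inequality in `ℓ²` followed by Jensen's inequality for `t ↦ t²` (weights `1 - ρ`, `ρ`) gives
`‖u + v‖_F² ≤ (1 - ρ)‖e‖_F² + ‖v‖_F² / ρ`. Cauchy–Schwarz bounds `‖v‖_F²` by `C_{π1} ∑ ‖w_j‖²`, and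
`‖∇f_j(θ_j)‖ ≤ L‖e_j‖ + ς + ‖∇F(θ̂)‖` bounds the drift; the step-size condition absorbs its
`‖e‖_F²` part into half of the contraction.
-/

open Finset

section SumsOfSquares

variable {ι E : Type*} [Fintype ι] [SeminormedAddCommGroup E]

lemma sqrt_sum_norm_add_sq_le (u v : ι → E) :
    √(∑ i, ‖u i + v i‖ ^ 2) ≤ √(∑ i, ‖u i‖ ^ 2) + √(∑ i, ‖v i‖ ^ 2) := by
  simpa only [← WithLp.toLp_add, PiLp.norm_eq_of_L2, PiLp.toLp_apply, Pi.add_apply] using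
    norm_add_le (WithLp.toLp 2 u) (WithLp.toLp 2 v)

/-- Jensen's inequality for `t ↦ t²` at the points `x` and `z / ρ` with weights `1 - ρ` and `ρ`. -/
lemma one_sub_mul_add_sq_le {ρ : ℝ} (x z : ℝ) (hρ0 : 0 < ρ) (hρ1 : ρ ≤ 1) :
    ((1 - ρ) * x + z) ^ 2 ≤ (1 - ρ) * x ^ 2 + z ^ 2 / ρ := by
  have hgap : (1 - ρ) * x ^ 2 + z ^ 2 / ρ - ((1 - ρ) * x + z) ^ 2
      = (1 - ρ) * (ρ * x - z) ^ 2 / ρ := by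
    field_simp
    ring
  have : 0 ≤ (1 - ρ) * (ρ * x - z) ^ 2 / ρ := by
    have : 0 ≤ 1 - ρ := by linarith
    positivity
  linarith

lemma sum_norm_add_sq_le_of_contraction (u v : ι → E) {ρ X : ℝ} (hρ0 : 0 < ρ) (hρ1 : ρ ≤ 1)
    (hX : 0 ≤ X) (hu : ∑ i, ‖u i‖ ^ 2 ≤ (1 - ρ) ^ 2 * X) :
    ∑ i, ‖u i + v i‖ ^ 2 ≤ (1 - ρ) * X + (∑ i, ‖v i‖ ^ 2) / ρ := by
  have hu' : √(∑ i, ‖u i‖ ^ 2) ≤ (1 - ρ) * √X := by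
    rw [← Real.sqrt_sq (sub_nonneg.2 hρ1), ← Real.sqrt_mul (sq_nonneg _)]
    exact Real.sqrt_le_sqrt hu
  have htri : √(∑ i, ‖u i + v i‖ ^ 2) ≤ (1 - ρ) * √X + √(∑ i, ‖v i‖ ^ 2) :=
    (sqrt_sum_norm_add_sq_le u v).trans (by linarith)
  calc ∑ i, ‖u i + v i‖ ^ 2 = √(∑ i, ‖u i + v i‖ ^ 2) ^ 2 :=
        (Real.sq_sqrt (by positivity)).symm
    _ ≤ ((1 - ρ) * √X + √(∑ i, ‖v i‖ ^ 2)) ^ 2 := pow_le_pow_left₀ (Real.sqrt_nonneg _) htri 2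
    _ ≤ (1 - ρ) * √X ^ 2 + √(∑ i, ‖v i‖ ^ 2) ^ 2 / ρ := one_sub_mul_add_sq_le _ _ hρ0 hρ1
    _ = (1 - ρ) * X + (∑ i, ‖v i‖ ^ 2) / ρ := by
        rw [Real.sq_sqrt hX, Real.sq_sqrt (by positivity)]

variable [NormedSpace ℝ E]

lemma norm_sum_smul_sq_le (b : ι → ℝ) (w : ι → E) :
    ‖∑ j, b j • w j‖ ^ 2 ≤ (∑ j, b j ^ 2) * ∑ j, ‖w j‖ ^ 2 := by
  calc ‖∑ j, b j • w j‖ ^ 2 ≤ (∑ j, |b j| * ‖w j‖) ^ 2 := by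
        gcongr
        refine (norm_sum_le _ _).trans_eq ?_
        simp only [norm_smul, Real.norm_eq_abs]
    _ ≤ (∑ j, |b j| ^ 2) * ∑ j, ‖w j‖ ^ 2 := sum_mul_sq_le_sq_mul_sq _ _ _
    _ = (∑ j, b j ^ 2) * ∑ j, ‖w j‖ ^ 2 := by simp only [sq_abs]

lemma sum_norm_weighted_mean_sub_sq_le [DecidableEq ι] (π : ι → ℝ) (w : ι → E) :
    ∑ i, ‖∑ j, π j • w j - w i‖ ^ 2
      ≤ (∑ j, ((1 - π j) ^ 2 + ((Fintype.card ι : ℝ) - 1) * π j ^ 2)) * ∑ j, ‖w j‖ ^ 2 := by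
  have hrow : ∀ i, ∑ j, π j • w j - w i = ∑ j, (π j - if i = j then 1 else 0) • w j := by
    intro i
    simp [sub_smul, sum_sub_distrib, ite_smul]
  have hcol : ∀ j, ∑ i, (π j - if i = j then 1 else 0) ^ 2
      = (1 - π j) ^ 2 + ((Fintype.card ι : ℝ) - 1) * π j ^ 2 := by
    intro j
    have hsplit : ∀ i, (π j - if i = j then 1 else 0) ^ 2
        = π j ^ 2 + if i = j then 1 - 2 * π j else 0 := by
      intro i
      split_ifs <;> ring
    simp only [hsplit, sum_add_distrib, sum_const, card_univ, sum_ite_eq', mem_univ, if_true,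
      nsmul_eq_mul]
    ring
  calc ∑ i, ‖∑ j, π j • w j - w i‖ ^ 2
      ≤ ∑ i, (∑ j, (π j - if i = j then 1 else 0) ^ 2) * ∑ j, ‖w j‖ ^ 2 :=
        sum_le_sum fun i _ => hrow i ▸ norm_sum_smul_sq_le _ _
    _ = _ := by rw [← sum_mul, sum_comm]; simp only [hcol]

lemma sum_norm_smul_sq_le_sum_sq_mul (c : ι → ℝ) (g : ι → E) (a : ι → ℝ) (b : ℝ) (ha : ∀ i, 0 ≤ a i)
    (hg : ∀ i, ‖g i‖ ^ 2 ≤ a i + b) :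
    ∑ i, ‖c i • g i‖ ^ 2 ≤ (∑ i, c i ^ 2) * (∑ i, a i + b) := by
  have hmax : ∑ i, c i ^ 2 * a i ≤ (∑ i, c i ^ 2) * ∑ i, a i := by
    rw [mul_sum]
    exact sum_le_sum fun i _ => mul_le_mul_of_nonneg_right
      (single_le_sum (fun j _ => sq_nonneg (c j)) (mem_univ i)) (ha i)
  calc ∑ i, ‖c i • g i‖ ^ 2 ≤ ∑ i, c i ^ 2 * (a i + b) := by
        refine sum_le_sum fun i _ => ?_
        rw [norm_smul, mul_pow, Real.norm_eq_abs, sq_abs]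
        exact mul_le_mul_of_nonneg_left (hg i) (sq_nonneg _)
    _ ≤ (∑ i, c i ^ 2) * (∑ i, a i + b) := by
        simp only [mul_add, sum_add_distrib, ← sum_mul]
        linarith

end SumsOfSquares

lemma sum_norm_sq_matrix_smul_le {ι κ : Type*} [Fintype ι] [Fintype κ] (M : Matrix ι ι ℝ) {c : ℝ}
    (hM : ∀ x : ι → ℝ, ∑ i, (∑ j, M i j * x j) ^ 2 ≤ c * ∑ i, (x i) ^ 2)
    (e : ι → EuclideanSpace ℝ κ) :
    ∑ i, ‖∑ j, M i j • e j‖ ^ 2 ≤ c * ∑ i, ‖e i‖ ^ 2 := by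
  simp only [EuclideanSpace.real_norm_sq_eq]
  calc ∑ i, ∑ k, (∑ j, M i j • e j) k ^ 2 = ∑ k, ∑ i, (∑ j, M i j * e j k) ^ 2 := by
        rw [sum_comm]
        simp
    _ ≤ ∑ k, c * ∑ j, e j k ^ 2 := sum_le_sum fun k _ => hM _
    _ = c * ∑ j, ∑ k, e j k ^ 2 := by rw [← mul_sum, sum_comm]

lemma sub_weighted_mean_of_step {ι E : Type*} [Fintype ι] [AddCommGroup E] [Module ℝ E]
    (A : Matrix ι ι ℝ) (π : ι → ℝ) (hA_row : ∀ i, ∑ j, A i j = 1)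
    (hπ_left : ∀ j, ∑ i, π i * A i j = π j) (hπ_sum : ∑ i, π i = 1) (θ w : ι → E) (i : ι) :
    (∑ j, A i j • θ j - w i) - ∑ j, π j • (∑ k, A j k • θ k - w j)
      = ∑ j, (A i j - π j) • (θ j - ∑ k, π k • θ k) + (∑ j, π j • w j - w i) := by
  have hmean : ∑ j, π j • ∑ k, A j k • θ k = ∑ k, π k • θ k := by
    simp_rw [smul_sum, smul_smul]
    rw [sum_comm]
    simp_rw [← sum_smul, hπ_left]
  have hdev : ∑ j, (A i j - π j) • (θ j - ∑ k, π k • θ k)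
      = ∑ j, A i j • θ j - ∑ k, π k • θ k := by
    simp only [sub_smul, smul_sub, sum_sub_distrib]
    rw [← sum_smul, ← sum_smul, hA_row, hπ_sum, one_smul]
    abel
  rw [hdev]
  simp only [smul_sub, sum_sub_distrib, hmean]
  abel

/-- The weights `1/8 + 1/4 + 1/2 ≤ 1` are the ones the final bound can afford. -/
lemma sq_le_of_le_add_add {x a b c : ℝ} (hx : 0 ≤ x) (h : x ≤ a + b + c) :
    x ^ 2 ≤ 8 * a ^ 2 + (4 * b ^ 2 + 2 * c ^ 2) := by
  have hsq : x ^ 2 ≤ (a + b + c) ^ 2 := pow_le_pow_left₀ hx h 2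
  nlinarith [sq_nonneg (2 * a - b), sq_nonneg (b - c), sq_nonneg (4 * a - c)]

lemma norm_sq_le_of_norm_sub_le {E : Type*} [SeminormedAddCommGroup E] {g g' G : E} {a b : ℝ}
    (h₁ : ‖g - g'‖ ≤ a) (h₂ : ‖G - g'‖ ≤ b) :
    ‖g‖ ^ 2 ≤ 8 * a ^ 2 + (4 * b ^ 2 + 2 * ‖G‖ ^ 2) := by
  refine sq_le_of_le_add_add (norm_nonneg g) ?_
  calc ‖g‖ = ‖(g - g') - (G - g') + G‖ := by congr 1; abel
    _ ≤ ‖g - g'‖ + ‖G - g'‖ + ‖G‖ := (norm_add_le _ _).trans (by gcongr; exact norm_sub_le _ _)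
    _ ≤ a + b + ‖G‖ := by gcongr

lemma sixteen_mul_sq_le_of_le_div {γ L K m : ℝ} (hγ : 0 < γ) (hL : 0 < L) (hK : 0 ≤ K)
    (h : γ ≤ m / (4 * L * √K)) : 16 * γ ^ 2 * L ^ 2 * K ≤ m ^ 2 := by
  rcases (Real.sqrt_nonneg K).eq_or_lt with h0 | hpos
  · rw [← Real.sq_sqrt hK, ← h0]
    simp only [ne_eq, OfNat.ofNat_ne_zero, not_false_eq_true, zero_pow, mul_zero]
    positivity
  · have hb : γ * (4 * L * √K) ≤ m := (le_div_iff₀ (by positivity)).1 h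
    calc 16 * γ ^ 2 * L ^ 2 * K = (γ * (4 * L * √K)) ^ 2 := by
          rw [mul_pow, mul_pow, mul_pow, Real.sq_sqrt hK]; ring
      _ ≤ m ^ 2 := pow_le_pow_left₀ (by positivity) hb 2

/-- The step-size condition makes the `L²`-part of the drift at most half of the contraction. -/
lemma consensus_error_arith {n ρ C D L γ ς H E T : ℝ} (hn : 1 ≤ n) (hρ0 : 0 < ρ) (hC : 0 ≤ C)
    (hD : 0 ≤ D) (hE : 0 ≤ E) (hγ : 16 * γ ^ 2 * L ^ 2 * (C * D) ≤ (n * ρ) ^ 2)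
    (hT : T ≤ (1 - ρ) * E
      + C * (γ ^ 2 / n ^ 2 * D * (8 * L ^ 2 * E + (4 * ς ^ 2 + 2 * H ^ 2))) / ρ) :
    1 / n * T ≤ (1 - ρ / 2) * (1 / n * E) + 4 * C * D / (n ^ 2 * ρ) * γ ^ 2 * ς ^ 2
      + 2 * C * D / (n ^ 3 * ρ) * γ ^ 2 * H ^ 2 := by
  have hn0 : 0 < n := by linarith
  refine (mul_le_mul_of_nonneg_left hT (by positivity)).trans (sub_nonneg.1 ?_)
  have hgap : (1 - ρ / 2) * (1 / n * E) + 4 * C * D / (n ^ 2 * ρ) * γ ^ 2 * ς ^ 2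
      + 2 * C * D / (n ^ 3 * ρ) * γ ^ 2 * H ^ 2
      - 1 / n * ((1 - ρ) * E
        + C * (γ ^ 2 / n ^ 2 * D * (8 * L ^ 2 * E + (4 * ς ^ 2 + 2 * H ^ 2))) / ρ)
      = (((n * ρ) ^ 2 - 16 * γ ^ 2 * L ^ 2 * (C * D)) * E / 2
        + 4 * (n - 1) * (C * D) * γ ^ 2 * ς ^ 2) / (n ^ 3 * ρ) := by
    field_simp
    ring
  rw [hgap]
  have : 0 ≤ n - 1 := by linarith
  have : 0 ≤ (n * ρ) ^ 2 - 16 * γ ^ 2 * L ^ 2 * (C * D) := by linarith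
  positivity

/-- Row `i` of `(I - 𝟙πᵀ)Θ` is `θ_i - θ̂` because `πᵀ𝟙 = 1`, so squared Frobenius norms are sums of
squared row norms; `hspec` encodes `‖A - 𝟙πᵀ‖₂ ≤ 1 - ρ`. -/
theorem stmt_11_general (n d : ℕ) (hn : 1 ≤ n)
    (A : Matrix (Fin n) (Fin n) ℝ) (π : Fin n → ℝ) (ρ : ℝ)
    (hρ0 : 0 < ρ) (hρ1 : ρ ≤ 1)
    (hA_row : ∀ i, ∑ j, A i j = 1)
    (hπ_left : ∀ j, ∑ i, π i * A i j = π j)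
    (hπ_sum : ∑ i, π i = 1)
    (hspec : ∀ x : Fin n → ℝ,
      ∑ i, (∑ j, (A i j - π j) * x j) ^ 2 ≤ (1 - ρ) ^ 2 * ∑ i, (x i) ^ 2)
    (L ς : ℝ) (hL : 0 < L)
    (f : Fin n → EuclideanSpace ℝ (Fin d) → ℝ)
    (hLip : ∀ i x z, ‖gradient (f i) x - gradient (f i) z‖ ≤ L * ‖x - z‖)
    (hhet : ∀ i x,
      ‖gradient (fun z => (1 / (n : ℝ)) * ∑ j, f j z) x - gradient (f i) x‖ ≤ ς)
    (θ : Fin n → EuclideanSpace ℝ (Fin d))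
    (y : Fin n → ℝ)
    (γ : ℝ) :
    let F : EuclideanSpace ℝ (Fin d) → ℝ := fun x => (1 / (n : ℝ)) * ∑ i, f i x
    let θhat : EuclideanSpace ℝ (Fin d) := ∑ i, π i • θ i
    let D : ℝ := ∑ i, 1 / (y i) ^ 2
    let Cπ1 : ℝ := ∑ i, ((1 - π i) ^ 2 + ((n : ℝ) - 1) * (π i) ^ 2)
    let θplus : Fin n → EuclideanSpace ℝ (Fin d) := fun i =>
      (∑ j, A i j • θ j) - (γ / ((n : ℝ) * y i)) • gradient (f i) (θ i)
    0 < γ → γ ≤ (n : ℝ) * ρ / (4 * L * Real.sqrt (Cπ1 * D)) →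
    (1 / (n : ℝ)) * ∑ i, ‖θplus i - ∑ j, π j • θplus j‖ ^ 2
      ≤ (1 - ρ / 2) * ((1 / (n : ℝ)) * ∑ i, ‖θ i - θhat‖ ^ 2)
        + (4 * Cπ1 * D / ((n : ℝ) ^ 2 * ρ)) * γ ^ 2 * ς ^ 2
        + (2 * Cπ1 * D / ((n : ℝ) ^ 3 * ρ)) * γ ^ 2 * ‖gradient F θhat‖ ^ 2 := by
  intro F θhat D Cπ1 θplus hγ hγ_le
  set e : Fin n → EuclideanSpace ℝ (Fin d) := fun i => θ i - θhat
  set w : Fin n → EuclideanSpace ℝ (Fin d) :=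
    fun i => (γ / ((n : ℝ) * y i)) • gradient (f i) (θ i)
  have hC : 0 ≤ Cπ1 := sum_nonneg fun i _ => by
    have : (0 : ℝ) ≤ n - 1 := by rw [sub_nonneg]; exact_mod_cast hn
    positivity
  have hD : 0 ≤ D := sum_nonneg fun i _ => by positivity
  have hE : 0 ≤ ∑ i, ‖e i‖ ^ 2 := by positivity
  have hrow (i : Fin n) : θplus i - ∑ j, π j • θplus j
      = ∑ j, (A i j - π j) • e j + (∑ j, π j • w j - w i) :=
    sub_weighted_mean_of_step A π hA_row hπ_left hπ_sum θ w i
  have hT := sum_norm_add_sq_le_of_contraction _ (fun i => ∑ j, π j • w j - w i) hρ0 hρ1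
    hE (sum_norm_sq_matrix_smul_le (fun i j => A i j - π j) hspec e)
  have hV := sum_norm_weighted_mean_sub_sq_le π w
  rw [Fintype.card_fin] at hV
  have hgrad (j : Fin n) : ‖gradient (f j) (θ j)‖ ^ 2
      ≤ 8 * (L * ‖e j‖) ^ 2 + (4 * ς ^ 2 + 2 * ‖gradient F θhat‖ ^ 2) :=
    norm_sq_le_of_norm_sub_le (hLip j (θ j) θhat) (hhet j θhat)
  have hW := sum_norm_smul_sq_le_sum_sq_mul (fun j => γ / ((n : ℝ) * y j)) _ _ _
    (fun j => by positivity) hgrad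
  have hcoef : ∑ j, (γ / ((n : ℝ) * y j)) ^ 2 = γ ^ 2 / (n : ℝ) ^ 2 * D := by
    rw [mul_sum]
    exact sum_congr rfl fun j _ => by ring
  have hsumE : ∑ j, 8 * (L * ‖e j‖) ^ 2 = 8 * L ^ 2 * ∑ j, ‖e j‖ ^ 2 := by
    rw [mul_sum]
    exact sum_congr rfl fun j _ => by ring
  rw [hcoef, hsumE] at hW
  refine consensus_error_arith (by exact_mod_cast hn) hρ0 hC hD hE
    (sixteen_mul_sq_le_of_le_div hγ hL (mul_nonneg hC hD) hγ_le) ?_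
  simp only [hrow]
  refine hT.trans (add_le_add le_rfl (div_le_div_of_nonneg_right ?_ hρ0.le))
  exact hV.trans (mul_le_mul_of_nonneg_left hW hC)

/-- Consensus-error contraction for one Di-DGD step
`Θ⁺ = AΘ − (γ/n)Ỹ⁻¹𝐆`.  Row `i` of `Θ⁺` is
`∑_j A_{ij} θ_j − (γ/(n y_i))∇f_i(θ_i)`, and since `πᵀ𝟙 = 1`, row `i` of
`(I − 𝟙πᵀ)Θ` is `θ_i − θ̂` with `θ̂ = ∑_j π_j θ_j`, so the squared Frobenius norms
are sums of squared Euclidean norms of these rows.  The spectral-norm hypothesis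
`‖A − 𝟙πᵀ‖₂ ≤ 1 − ρ` is expressed as `‖(A − 𝟙πᵀ)x‖² ≤ (1−ρ)²‖x‖²` for all `x`. -/
theorem stmt_11 (n d : ℕ) (hn : 1 ≤ n) (hd : 1 ≤ d)
    (A : Matrix (Fin n) (Fin n) ℝ) (π : Fin n → ℝ) (ρ : ℝ)
    (hρ0 : 0 < ρ) (hρ1 : ρ ≤ 1)
    (hA_row : ∀ i, ∑ j, A i j = 1)
    (hπ_left : ∀ j, ∑ i, π i * A i j = π j)
    (hπ_sum : ∑ i, π i = 1)
    (hspec : ∀ x : Fin n → ℝ,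
      ∑ i, (∑ j, (A i j - π j) * x j) ^ 2 ≤ (1 - ρ) ^ 2 * ∑ i, (x i) ^ 2)
    (L ς : ℝ) (hL : 0 < L)
    (f : Fin n → EuclideanSpace ℝ (Fin d) → ℝ)
    (hdiff : ∀ i, Differentiable ℝ (f i))
    (hLip : ∀ i x z, ‖gradient (f i) x - gradient (f i) z‖ ≤ L * ‖x - z‖)
    (hhet : ∀ i x,
      ‖gradient (fun z => (1 / (n : ℝ)) * ∑ j, f j z) x - gradient (f i) x‖ ≤ ς)
    (θ : Fin n → EuclideanSpace ℝ (Fin d))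
    (y : Fin n → ℝ) (hy : ∀ i, 0 < y i)
    (γ : ℝ) :
    let F : EuclideanSpace ℝ (Fin d) → ℝ := fun x => (1 / (n : ℝ)) * ∑ i, f i x
    let θhat : EuclideanSpace ℝ (Fin d) := ∑ i, π i • θ i
    let D : ℝ := ∑ i, 1 / (y i) ^ 2
    let Cπ1 : ℝ := ∑ i, ((1 - π i) ^ 2 + ((n : ℝ) - 1) * (π i) ^ 2)
    let θplus : Fin n → EuclideanSpace ℝ (Fin d) := fun i =>
      (∑ j, A i j • θ j) - (γ / ((n : ℝ) * y i)) • gradient (f i) (θ i)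
    0 < γ → γ ≤ (n : ℝ) * ρ / (4 * L * Real.sqrt (Cπ1 * D)) →
    (1 / (n : ℝ)) * ∑ i, ‖θplus i - ∑ j, π j • θplus j‖ ^ 2
      ≤ (1 - ρ / 2) * ((1 / (n : ℝ)) * ∑ i, ‖θ i - θhat‖ ^ 2)
        + (4 * Cπ1 * D / ((n : ℝ) ^ 2 * ρ)) * γ ^ 2 * ς ^ 2
        + (2 * Cπ1 * D / ((n : ℝ) ^ 3 * ρ)) * γ ^ 2 * ‖gradient F θhat‖ ^ 2 :=
  stmt_11_general n d hn A π ρ hρ0 hρ1 hA_row hπ_left hπ_sum hspec L ς hL f hLip hhet θ y γ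
end
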